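/- arXiv:1304.7199 — 2 statements merged into one kernel-verified Lean document; each statement's English description precedes it below -/
import Mathlib

section
/- For a bounded domain Ω ⊂ ℂⁿ and ψ ∈ C(Ω̄), the essential norm of the Toeplitz operator satisfies ‖T_ψ‖_e ≤ sup{|ψ(z)| : z ∈ bΩ}, provided T_χψ is compact whenever χψ vanishes on a neighborhood of bΩ (equivalently: Toeplitz operators with compactly supported bounded symbols are compact on A²(Ω)). -/
variable {n : ℕ} {L : Type*} [NormedAddCommGroup L] [InnerProductSpace ℂ L] [CompleteSpace L]

/-- The Toeplitz operator `T_φ = P ∘ M_φ ∘ ι` on the Bergman space `A`. -/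
noncomputable def toeplitz (A : Submodule ℂ L) [CompleteSpace A]
    (M : ((Fin n → ℂ) → ℂ) → (L →L[ℂ] L)) (φ : (Fin n → ℂ) → ℂ) : A →L[ℂ] A :=
  ((Submodule.orthogonalProjectionOnto A).comp (M φ)).comp A.subtypeL

/-- The essential norm `‖T‖_e = inf {‖T − S‖ : S compact}` of a bounded operator. -/
noncomputable def essNorm {A : Type*} [NormedAddCommGroup A] [NormedSpace ℂ A]
    (T : A →L[ℂ] A) : ℝ :=
  sInf {r | ∃ S : A →L[ℂ] A, IsCompactOperator ⇑S ∧ r = ‖T - S‖}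

omit [CompleteSpace L] in
/-- The norm of a Toeplitz operator is dominated by the norm of the multiplier. -/
theorem toeplitz_norm_le (A : Submodule ℂ L) [CompleteSpace A]
    (M : ((Fin n → ℂ) → ℂ) → (L →L[ℂ] L)) (g : (Fin n → ℂ) → ℂ) :
    ‖toeplitz A M g‖ ≤ ‖M g‖ := by
  apply ContinuousLinearMap.opNorm_le_bound _ (norm_nonneg _)
  intro x
  have h1 : ‖toeplitz A M g x‖ ≤ ‖M g (x : L)‖ := by
    simpa [toeplitz] using
      (Submodule.orthogonalProjectionOnto A).le_of_opNorm_le (Submodule.orthogonalProjectionOnto_norm_le A) (M g (x : L))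
  have h2 : ‖M g (x : L)‖ ≤ ‖M g‖ * ‖(x : L)‖ := (M g).le_opNorm _
  calc ‖toeplitz A M g x‖ ≤ ‖M g (x : L)‖ := h1
    _ ≤ ‖M g‖ * ‖(x : L)‖ := h2
    _ = ‖M g‖ * ‖x‖ := by rw [Submodule.norm_coe]

/-- For a bounded domain `Ω ⊂ ℂⁿ` and `ψ ∈ C(Ω̄)`, the essential norm of the Toeplitz
operator satisfies `‖T_ψ‖_e ≤ sup {|ψ(z)| : z ∈ bΩ}`, provided Toeplitz operators whose
symbols vanish on a neighborhood of `bΩ` are compact.  Here `M` is the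
multiplication-operator map (additive, with norm dominated by the sup of the symbol
over `Ω`). -/
theorem essNorm_toeplitz_le (Ω : Set (Fin n → ℂ)) (hΩ : Bornology.IsBounded Ω)
    (A : Submodule ℂ L) [CompleteSpace A]
    (M : ((Fin n → ℂ) → ℂ) → (L →L[ℂ] L))
    (hMadd : ∀ φ ψ : (Fin n → ℂ) → ℂ, M (φ + ψ) = M φ + M ψ)
    (hMnorm : ∀ (φ : (Fin n → ℂ) → ℂ) (C : ℝ), (∀ z ∈ Ω, ‖φ z‖ ≤ C) → ‖M φ‖ ≤ C)
    (hcompact : ∀ φ : (Fin n → ℂ) → ℂ,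
      (∃ U : Set (Fin n → ℂ), IsOpen U ∧ frontier Ω ⊆ U ∧ ∀ x ∈ U, φ x = 0) →
      IsCompactOperator ⇑(toeplitz A M φ))
    (ψ : (Fin n → ℂ) → ℂ) (hψ : ContinuousOn ψ (closure Ω)) :
    essNorm (toeplitz A M ψ) ≤ sSup ((fun z => ‖ψ z‖) '' frontier Ω) := by
  set s := sSup ((fun z => ‖ψ z‖) '' frontier Ω) with hs
  -- the boundary is compact
  have hfb : Bornology.IsBounded (frontier Ω) :=
    hΩ.closure.subset (frontier_subset_closure)
  have hK : IsCompact (frontier Ω) :=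
    Metric.isCompact_of_isClosed_isBounded isClosed_frontier hfb
  have hcont : ContinuousOn (fun z => ‖ψ z‖) (frontier Ω) :=
    (hψ.mono frontier_subset_closure).norm
  have hbdd : BddAbove ((fun z => ‖ψ z‖) '' frontier Ω) :=
    (hK.image_of_continuousOn hcont).bddAbove
  have hle_s : ∀ z ∈ frontier Ω, ‖ψ z‖ ≤ s :=
    fun z hz => le_csSup hbdd ⟨z, hz, rfl⟩
  have hs0 : 0 ≤ s := by
    rcases (frontier Ω).eq_empty_or_nonempty with h | ⟨z, hz⟩
    · simp [hs, h, Real.sSup_empty]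
    · exact le_trans (norm_nonneg (ψ z)) (hle_s z hz)
  have key : ∀ α : ℝ, s < α → essNorm (toeplitz A M ψ) ≤ α := by
    intro α hα
    set C : Set (Fin n → ℂ) := closure Ω ∩ (fun x => ‖ψ x‖) ⁻¹' Set.Ici α with hCdef
    have hC : IsClosed C :=
      hψ.norm.preimage_isClosed_of_isClosed isClosed_closure isClosed_Ici
    set φ : (Fin n → ℂ) → ℂ := Set.indicator C ψ with hφdef
    have hfr : frontier Ω ⊆ Cᶜ := by
      intro z hz hzC
      exact absurd hzC.2 (not_le.mpr (lt_of_le_of_lt (hle_s z hz) hα))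
    have Tcomp : IsCompactOperator ⇑(toeplitz A M φ) := by
      refine hcompact φ ⟨Cᶜ, hC.isOpen_compl, hfr, fun x hx => ?_⟩
      exact Set.indicator_of_notMem hx ψ
    -- the difference operator
    have hM : M ψ = M (ψ - φ) + M φ := by
      rw [← hMadd]; congr 1; abel
    have hdiff : toeplitz A M ψ - toeplitz A M φ = toeplitz A M (ψ - φ) := by
      simp only [toeplitz, hM, ContinuousLinearMap.comp_add, ContinuousLinearMap.add_comp]
      abel
    have hbound : ∀ z ∈ Ω, ‖(ψ - φ) z‖ ≤ α := by
      intro z hz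
      by_cases hzC : z ∈ C
      · simp [hφdef, Set.indicator_of_mem hzC, le_trans hs0 (le_of_lt hα)]
      · have hzc : z ∈ closure Ω := subset_closure hz
        have : ¬ α ≤ ‖ψ z‖ := fun h => hzC ⟨hzc, h⟩
        simpa [hφdef, Set.indicator_of_notMem hzC] using le_of_lt (not_le.mp this)
    have hnorm : ‖toeplitz A M ψ - toeplitz A M φ‖ ≤ α := by
      rw [hdiff]
      exact le_trans (toeplitz_norm_le A M (ψ - φ)) (hMnorm (ψ - φ) α hbound)
    have hmem : ‖toeplitz A M ψ - toeplitz A M φ‖ ∈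
        {r | ∃ S : A →L[ℂ] A, IsCompactOperator ⇑S ∧ r = ‖toeplitz A M ψ - S‖} :=
      ⟨toeplitz A M φ, Tcomp, rfl⟩
    have hbelow : BddBelow {r | ∃ S : A →L[ℂ] A, IsCompactOperator ⇑S ∧
        r = ‖toeplitz A M ψ - S‖} := by
      refine ⟨0, fun r hr => ?_⟩
      obtain ⟨S, -, hrS⟩ := hr
      rw [hrS]; exact norm_nonneg (toeplitz A M ψ - S)
    exact le_trans (csInf_le hbelow hmem) hnorm
  exact le_of_forall_gt_imp_ge_of_dense key
end

section
/- If Ω is a bounded convex domain in ℂ² with C¹ boundary and D, D̃ are analytic disks in bΩ with D = L ∩ Ω̄ and D̃ = L̃ ∩ Ω̄ for complex lines L, L̃, and D and D̃ share a point p at which both lines lie in the (unique, real) tangent space of bΩ at p, then L = L̃ and D = D̃. -/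
open scoped InnerProductSpace ComplexOrder

/-- A complex line in `ℂ²` through `a` with direction `v`. -/
def complexLine (a v : EuclideanSpace ℂ (Fin 2)) : Set (EuclideanSpace ℂ (Fin 2)) :=
  {x | ∃ t : ℂ, x = a + t • v}

-- line through its own point
lemma line_rebase (a v p : EuclideanSpace ℂ (Fin 2)) (hp : p ∈ complexLine a v) :
    complexLine a v = complexLine p v := by
  obtain ⟨t₀, rfl⟩ := hp
  ext x
  constructor
  · rintro ⟨t, rfl⟩; exact ⟨t - t₀, by module⟩
  · rintro ⟨t, rfl⟩; exact ⟨t₀ + t, by module⟩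

lemma line_smul (p v : EuclideanSpace ℂ (Fin 2)) (c : ℂ) (hc : c ≠ 0) :
    complexLine p (c • v) = complexLine p v := by
  ext x
  constructor
  · rintro ⟨t, rfl⟩; exact ⟨t * c, by module⟩
  · rintro ⟨t, rfl⟩; exact ⟨t / c, by rw [smul_smul, div_mul_cancel₀ _ hc]⟩

lemma inner_eq_zero (ν p v : EuclideanSpace ℂ (Fin 2))
    (h : ∀ t : ℂ, (⟪ν, (p + t • v) - p⟫_ℂ).re = 0) : ⟪ν, v⟫_ℂ = 0 := by
  have h1 := h 1
  have hi := h Complex.I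
  simp only [add_sub_cancel_left, inner_smul_right, one_smul] at h1 hi
  set c := ⟪ν, v⟫_ℂ with hc
  rw [Complex.mul_re, Complex.I_re, Complex.I_im] at hi
  apply Complex.ext
  · simpa using h1
  · simp only [Complex.zero_im]
    linarith

lemma parallel_of_orthogonal (ν v v' : EuclideanSpace ℂ (Fin 2)) (hν : ν ≠ 0) (hv : v ≠ 0)
    (h1 : ⟪ν, v⟫_ℂ = 0) (h2 : ⟪ν, v'⟫_ℂ = 0) : ∃ c : ℂ, v' = c • v := by
  set K := (ℂ ∙ ν : Submodule ℂ (EuclideanSpace ℂ (Fin 2)))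
  have hvK : v ∈ Kᗮ := by
    rw [Submodule.mem_orthogonal]
    intro u hu
    obtain ⟨c, rfl⟩ := Submodule.mem_span_singleton.mp hu
    rw [inner_smul_left, h1, mul_zero]
  have hv'K : v' ∈ Kᗮ := by
    rw [Submodule.mem_orthogonal]
    intro u hu
    obtain ⟨c, rfl⟩ := Submodule.mem_span_singleton.mp hu
    rw [inner_smul_left, h2, mul_zero]
  have hK : Module.finrank ℂ K = 1 := finrank_span_singleton hν
  have htot : Module.finrank ℂ K + Module.finrank ℂ Kᗮ =
      Module.finrank ℂ (EuclideanSpace ℂ (Fin 2)) :=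
    Submodule.finrank_add_finrank_orthogonal K
  have hdim : Module.finrank ℂ (EuclideanSpace ℂ (Fin 2)) = 2 := by simp
  have hKperp : Module.finrank ℂ Kᗮ = 1 := by omega
  have hspan : (ℂ ∙ v : Submodule ℂ (EuclideanSpace ℂ (Fin 2))) = Kᗮ := by
    apply Submodule.eq_of_le_of_finrank_eq
    · rwa [Submodule.span_singleton_le_iff_mem]
    · rw [hKperp, finrank_span_singleton hv]
  rw [← hspan] at hv'K
  obtain ⟨c, hc⟩ := Submodule.mem_span_singleton.mp hv'K
  exact ⟨c, hc.symm⟩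

theorem analytic_disks_coincide'
    (a v a' v' : EuclideanSpace ℂ (Fin 2)) (hv : v ≠ 0) (hv' : v' ≠ 0)
    (p : EuclideanSpace ℂ (Fin 2))
    (hp : p ∈ complexLine a v) (hp2 : p ∈ complexLine a' v')
    (ν : EuclideanSpace ℂ (Fin 2)) (hν : ν ≠ 0)
    (htangent : ∀ x ∈ complexLine a v, (⟪ν, x - p⟫_ℂ).re = 0)
    (htangent2 : ∀ x ∈ complexLine a' v', (⟪ν, x - p⟫_ℂ).re = 0) :
    complexLine a v = complexLine a' v' := by
  have e1 : complexLine a v = complexLine p v := line_rebase a v p hp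
  have e2 : complexLine a' v' = complexLine p v' := line_rebase a' v' p hp2
  have o1 : ⟪ν, v⟫_ℂ = 0 := by
    apply inner_eq_zero
    intro t
    exact htangent _ (by rw [e1]; exact ⟨t, rfl⟩)
  have o2 : ⟪ν, v'⟫_ℂ = 0 := by
    apply inner_eq_zero
    intro t
    exact htangent2 _ (by rw [e2]; exact ⟨t, rfl⟩)
  obtain ⟨c, rfl⟩ := parallel_of_orthogonal ν v v' hν hv o1 o2
  have hc : c ≠ 0 := by rintro rfl; simp at hv'
  rw [e1, e2, line_smul p v c hc]

/-- If `Ω` is a bounded convex domain in `ℂ²` with `C¹` boundary and `D = L ∩ Ω̄`,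
`D̃ = L̃ ∩ Ω̄` are analytic disks in `bΩ` given by complex lines `L, L̃`, and `D, D̃`
share a point `p` at which both lines lie in the (unique, real) tangent space of `bΩ`
at `p` (the real hyperplane orthogonal to the unit outward normal `ν`), then `L = L̃`
and `D = D̃`. -/
theorem analytic_disks_coincide
    (Ω : Set (EuclideanSpace ℂ (Fin 2))) (hconv : Convex ℝ Ω)
    (hΩb : Bornology.IsBounded Ω) (hΩo : IsOpen Ω)
    (a v a' v' : EuclideanSpace ℂ (Fin 2)) (hv : v ≠ 0) (hv' : v' ≠ 0)
    (hL : complexLine a v ∩ closure Ω ⊆ frontier Ω)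
    (hL2 : complexLine a' v' ∩ closure Ω ⊆ frontier Ω)
    (p : EuclideanSpace ℂ (Fin 2))
    (hp : p ∈ complexLine a v ∩ closure Ω) (hp2 : p ∈ complexLine a' v' ∩ closure Ω)
    (ν : EuclideanSpace ℂ (Fin 2)) (hν : ν ≠ 0)
    -- `ν` is an outward normal to the convex set `Ω̄` at `p`, and the tangent space
    -- `{x | Re ⟪ν, x − p⟫ = 0}` at the `C¹` boundary point `p` contains both lines:
    (hsupport : ∀ x ∈ closure Ω, (⟪ν, x - p⟫_ℂ).re ≤ 0)
    (htangent : ∀ x ∈ complexLine a v, (⟪ν, x - p⟫_ℂ).re = 0)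
    (htangent2 : ∀ x ∈ complexLine a' v', (⟪ν, x - p⟫_ℂ).re = 0) :
    complexLine a v = complexLine a' v' ∧
      complexLine a v ∩ closure Ω = complexLine a' v' ∩ closure Ω := by
  have hline := analytic_disks_coincide' a v a' v' hv hv' p hp.1 hp2.1 ν hν htangent htangent2
  exact ⟨hline, by rw [hline]⟩
end
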